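/- (Kernel upper bound used in Theorem 3.1.) Let 0 < H < 1/2 and T > 0. Then there exists a constant C > 0, depending only on H and T, such that K_H(t,s) ≤ C (t - s)^{H - 1/2} s^{H - 1/2} for all 0 < s < t ≤ T. -/
import Mathlib
open MeasureTheory Real
open Set

lemma shifted_rpow_integral {p s b : ℝ} (hp : -1 < p) :
    ∫ u in s..b, (u - s) ^ p = (b - s) ^ (p + 1) / (p + 1) := by
  rw [intervalIntegral.integral_comp_sub_right (fun x => x ^ p) s, sub_self,
    integral_rpow (Or.inl hp), Real.zero_rpow (by linarith), sub_zero]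

lemma shifted_rpow_integrable {p : ℝ} (s a b : ℝ) (hp : -1 < p) :
    IntervalIntegrable (fun u => (u - s) ^ p) volume a b := by
  have := (intervalIntegral.intervalIntegrable_rpow' hp (a := a - s) (b := b - s)).comp_sub_right s
  simpa using this

lemma g_cont {H s : ℝ} (hs : 0 < s) (hH : 1 / 2 - H ≥ 0) :
    ContinuousOn (fun u => (u - s) ^ (H - 3 / 2) * (1 - (s / u) ^ (1 / 2 - H))) (Ioi s) := by
  apply ContinuousOn.mul
  · apply ContinuousOn.rpow_const (by fun_prop)
    intro x hx
    exact Or.inl (by simp only [mem_Ioi] at hx; intro h; nlinarith [sub_eq_zero.mp h])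
  · apply continuousOn_const.sub
    apply ContinuousOn.rpow_const
    · exact continuousOn_const.div continuousOn_id (fun x hx => by
        simp only [mem_Ioi] at hx; linarith)
    · exact fun x _ => Or.inr hH

section pointwise
variable {H s u : ℝ}

lemma g_nonneg (hH1 : 0 < H) (hH2 : H < 1/2) (hs : 0 < s) (hu : s < u) :
    0 ≤ (u - s) ^ (H - 3 / 2) * (1 - (s / u) ^ (1 / 2 - H)) := by
  have h1 : (0:ℝ) ≤ (u - s) ^ (H - 3 / 2) := Real.rpow_nonneg (by linarith) _
  have h2 : (s / u) ^ (1 / 2 - H) ≤ 1 :=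
    Real.rpow_le_one (le_of_lt (div_pos hs (by linarith))) (by
      rw [div_le_one (by linarith)]; linarith) (by linarith)
  nlinarith

lemma g_le_sing (hH1 : 0 < H) (hH2 : H < 1/2) (hs : 0 < s) (hu : s < u) :
    (u - s) ^ (H - 3 / 2) * (1 - (s / u) ^ (1 / 2 - H)) ≤ (u - s) ^ (H - 3 / 2) := by
  have h1 : (0:ℝ) ≤ (u - s) ^ (H - 3 / 2) := Real.rpow_nonneg (by linarith) _
  have h2 : 0 < (s / u) ^ (1 / 2 - H) := Real.rpow_pos_of_pos (div_pos hs (by linarith)) _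
  nlinarith

lemma g_le_flat (hH1 : 0 < H) (hH2 : H < 1/2) (hs : 0 < s) (hu : s < u) :
    (u - s) ^ (H - 3 / 2) * (1 - (s / u) ^ (1 / 2 - H)) ≤ s⁻¹ * (u - s) ^ (H - 1 / 2) := by
  have hu0 : 0 < u := by linarith
  have hu0' : 0 < u := by linarith
  have hx0 : 0 < s / u := div_pos hs hu0'
  have hx1 : s / u ≤ 1 := by rw [div_le_one hu0]; linarith
  have key : s / u ≤ (s / u) ^ (1 / 2 - H) := by
    have := Real.rpow_le_rpow_of_exponent_ge hx0 hx1 (by linarith : (1:ℝ)/2 - H ≤ 1)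
    simpa using this
  have h3 : 1 - (s / u) ^ (1 / 2 - H) ≤ (u - s) / s := by
    have e1 : 1 - s / u = (u - s) / u := by field_simp
    have e2 : (u - s) / u ≤ (u - s) / s := by gcongr <;> linarith
    linarith
  have h1 : (0:ℝ) ≤ (u - s) ^ (H - 3 / 2) := Real.rpow_nonneg (by linarith) _
  calc (u - s) ^ (H - 3 / 2) * (1 - (s / u) ^ (1 / 2 - H))
      ≤ (u - s) ^ (H - 3 / 2) * ((u - s) / s) := by
        exact mul_le_mul_of_nonneg_left h3 h1
    _ = s⁻¹ * ((u - s) ^ (H - 3 / 2) * (u - s)) := by ring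
    _ = s⁻¹ * (u - s) ^ (H - 1 / 2) := by
        rw [show H - 1 / 2 = (H - 3 / 2) + 1 by ring,
          Real.rpow_add_one (by intro h; nlinarith [sub_eq_zero.mp h] : (u - s) ≠ 0)]

end pointwise

section integralbounds
variable {H s b t : ℝ}

lemma int_flat (hH1 : 0 < H) (hH2 : H < 1/2) (hs : 0 < s) (hsb : s < b) :
    IntervalIntegrable (fun u => (u - s) ^ (H - 3 / 2) * (1 - (s / u) ^ (1 / 2 - H))) volume s b ∧
    (∫ u in s..b, (u - s) ^ (H - 3 / 2) * (1 - (s / u) ^ (1 / 2 - H)))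
      ≤ s⁻¹ * ((b - s) ^ (H + 1 / 2) / (H + 1 / 2)) := by
  set g : ℝ → ℝ := fun u => (u - s) ^ (H - 3 / 2) * (1 - (s / u) ^ (1 / 2 - H)) with hg
  set ψ : ℝ → ℝ := fun u => s⁻¹ * (u - s) ^ (H - 1 / 2) with hψ
  have hψint : IntervalIntegrable ψ volume s b :=
    (shifted_rpow_integrable s s b (by linarith)).const_mul s⁻¹
  have hgm : AEStronglyMeasurable g (volume.restrict (Set.uIoc s b)) := by
    rw [Set.uIoc_of_le hsb.le]
    exact ((g_cont hs (by linarith)).mono Set.Ioc_subset_Ioi_self).aestronglyMeasurable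
      measurableSet_Ioc
  have hle : (fun x => ‖g x‖) ≤ᵐ[volume.restrict (Set.uIoc s b)] ψ := by
    rw [Set.uIoc_of_le hsb.le]
    refine (ae_restrict_iff' measurableSet_Ioc).2 (Filter.Eventually.of_forall fun u hu => ?_)
    show ‖g u‖ ≤ ψ u
    rw [Real.norm_eq_abs, abs_of_nonneg (g_nonneg hH1 hH2 hs hu.1)]
    exact g_le_flat hH1 hH2 hs hu.1
  have hgint : IntervalIntegrable g volume s b := hψint.mono_fun' hgm hle
  refine ⟨hgint, ?_⟩
  have hmono : (∫ u in s..b, g u) ≤ ∫ u in s..b, ψ u := by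
    refine intervalIntegral.integral_mono_on hsb.le hgint hψint fun u hu => ?_
    rcases eq_or_lt_of_le hu.1 with h | h
    · have e1 : g s = 0 := by
        simp only [hg, sub_self, Real.zero_rpow (show H - 3/2 ≠ 0 by intro hc; linarith),
          zero_mul]
      have e2 : ψ s = 0 := by
        simp only [hψ, sub_self, Real.zero_rpow (show H - 1/2 ≠ 0 by intro hc; linarith),
          mul_zero]
      rw [← h, e1, e2]
    · exact g_le_flat hH1 hH2 hs h
  have hval : (∫ u in s..b, ψ u) = s⁻¹ * ((b - s) ^ (H + 1 / 2) / (H + 1 / 2)) := by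
    rw [hψ]
    rw [intervalIntegral.integral_const_mul,
      shifted_rpow_integral (by linarith : (-1:ℝ) < H - 1/2),
      show H - 1/2 + 1 = H + 1/2 by ring]
  linarith [hmono, hval.le, hval.ge]

lemma int_tail (hH1 : 0 < H) (hH2 : H < 1/2) (hs : 0 < s) (hst : 2 * s ≤ t) :
    IntervalIntegrable (fun u => (u - s) ^ (H - 3 / 2) * (1 - (s / u) ^ (1 / 2 - H)))
      volume (2 * s) t ∧
    (∫ u in (2 * s)..t, (u - s) ^ (H - 3 / 2) * (1 - (s / u) ^ (1 / 2 - H)))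
      ≤ s ^ (H - 1 / 2) / (1 / 2 - H) := by
  set g : ℝ → ℝ := fun u => (u - s) ^ (H - 3 / 2) * (1 - (s / u) ^ (1 / 2 - H)) with hg
  set φ : ℝ → ℝ := fun u => (u - s) ^ (H - 3 / 2) with hφ
  have h0 : (0:ℝ) ∉ Set.uIcc (2 * s - s) (t - s) := by
    simp only [Set.mem_uIcc]
    push_neg
    constructor <;> (intro h; linarith)
  have hφint : IntervalIntegrable φ volume (2 * s) t := by
    have := (intervalIntegral.intervalIntegrable_rpow (μ := volume) (r := H - 3/2)
      (a := 2 * s - s) (b := t - s) (Or.inr h0)).comp_sub_right s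
    simpa using this
  have hgm : AEStronglyMeasurable g (volume.restrict (Set.uIoc (2 * s) t)) := by
    rw [Set.uIoc_of_le hst]
    refine ((g_cont hs (by linarith)).mono ?_).aestronglyMeasurable measurableSet_Ioc
    intro x hx
    simp only [Set.mem_Ioc] at hx
    simp only [Set.mem_Ioi]
    linarith
  have hle : (fun x => ‖g x‖) ≤ᵐ[volume.restrict (Set.uIoc (2 * s) t)] φ := by
    rw [Set.uIoc_of_le hst]
    refine (ae_restrict_iff' measurableSet_Ioc).2 (Filter.Eventually.of_forall fun u hu => ?_)
    have hsu : s < u := by have := hu.1; linarith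
    show ‖g u‖ ≤ φ u
    rw [Real.norm_eq_abs, abs_of_nonneg (g_nonneg hH1 hH2 hs hsu)]
    exact g_le_sing hH1 hH2 hs hsu
  have hgint : IntervalIntegrable g volume (2 * s) t := hφint.mono_fun' hgm hle
  refine ⟨hgint, ?_⟩
  have hmono : (∫ u in (2 * s)..t, g u) ≤ ∫ u in (2 * s)..t, φ u := by
    refine intervalIntegral.integral_mono_on hst hgint hφint fun u hu => ?_
    have hsu : s < u := by have := hu.1; linarith
    exact g_le_sing hH1 hH2 hs hsu
  have hval : (∫ u in (2 * s)..t, φ u)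
      = ((t - s) ^ (H - 1 / 2) - s ^ (H - 1 / 2)) / (H - 1 / 2) := by
    rw [hφ, intervalIntegral.integral_comp_sub_right (fun x => x ^ (H - 3/2)) s,
      integral_rpow (Or.inr ⟨show H - 3/2 ≠ -1 by intro hc; linarith, h0⟩),
      show H - 3/2 + 1 = H - 1/2 by ring, show 2 * s - s = s by ring]
  have h1 : (0:ℝ) ≤ (t - s) ^ (H - 1 / 2) := Real.rpow_nonneg (by linarith) _
  have key : ∀ A B : ℝ, 0 ≤ A → 0 ≤ B → (A - B) / (H - 1 / 2) ≤ B / (1 / 2 - H) := by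
    intro A B hA hB
    have hpos : (0:ℝ) < 1 / 2 - H := by linarith
    have e : (A - B) / (H - 1 / 2) = (B - A) / (1 / 2 - H) := by
      rw [show H - 1 / 2 = -(1 / 2 - H) by ring, div_neg]
      ring
    rw [e, div_le_div_iff₀ hpos hpos]
    nlinarith
  have h2 : ((t - s) ^ (H - 1 / 2) - s ^ (H - 1 / 2)) / (H - 1 / 2)
      ≤ s ^ (H - 1 / 2) / (1 / 2 - H) :=
    key _ _ h1 (Real.rpow_nonneg hs.le _)
  linarith
end integralbounds

/-- The constant `c_H = (2H Γ(3/2-H) / (Γ(H+1/2) Γ(2-2H)))^{1/2}`. -/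
noncomputable def cH (H : ℝ) : ℝ :=
  (2 * H * Real.Gamma (3 / 2 - H) / (Real.Gamma (H + 1 / 2) * Real.Gamma (2 - 2 * H))) ^ ((1 : ℝ) / 2)

/-- The fBm kernel for `0 < H < 1/2`:
`K_H(t,s) = c_H (t-s)^{H-1/2} + c_H (1/2-H) ∫_s^t (u-s)^{H-3/2} (1-(s/u)^{1/2-H}) du`. -/
noncomputable def Klo (H t s : ℝ) : ℝ :=
  cH H * (t - s) ^ (H - 1 / 2) +
    cH H * (1 / 2 - H) * ∫ u in s..t, (u - s) ^ (H - 3 / 2) * (1 - (s / u) ^ (1 / 2 - H))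

set_option maxHeartbeats 2000000 in
/-- Kernel upper bound used in Theorem 3.1: for `0 < H < 1/2` and `T > 0` there is `C > 0`
with `K_H(t,s) ≤ C (t-s)^{H-1/2} s^{H-1/2}` for all `0 < s < t ≤ T`. -/
theorem Klo_upper_bound (H T : ℝ) (hH : H ∈ Set.Ioo (0 : ℝ) (1 / 2)) (hT : 0 < T) :
    ∃ C > (0 : ℝ), ∀ s t, 0 < s → s < t → t ≤ T →
      Klo H t s ≤ C * (t - s) ^ (H - 1 / 2) * s ^ (H - 1 / 2) := by
  obtain ⟨hH1, hH2⟩ := hH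
  have hcH : 0 ≤ cH H := by
    have g1 : 0 < Real.Gamma (3 / 2 - H) := Real.Gamma_pos_of_pos (by linarith)
    have g2 : 0 < Real.Gamma (H + 1 / 2) := Real.Gamma_pos_of_pos (by linarith)
    have g3 : 0 < Real.Gamma (2 - 2 * H) := Real.Gamma_pos_of_pos (by linarith)
    exact Real.rpow_nonneg (by positivity) _
  have hD1 : (0:ℝ) < 1 / (H + 1 / 2) := by
    apply one_div_pos.mpr; linarith
  have hD2 : (0:ℝ) < 1 / (1 / 2 - H) := by
    apply one_div_pos.mpr; linarith
  have hTp : (0:ℝ) < T ^ (1 / 2 - H) := Real.rpow_pos_of_pos hT _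
  refine ⟨cH H * T ^ (1 / 2 - H) +
    cH H * (1 / 2 - H) * (T ^ (1 / 2 - H) * (1 / (H + 1 / 2) + 1 / (1 / 2 - H))) + 1, ?_, ?_⟩
  · have h1 : 0 ≤ cH H * T ^ (1 / 2 - H) := mul_nonneg hcH hTp.le
    have h2 : 0 ≤ cH H * (1 / 2 - H) *
        (T ^ (1 / 2 - H) * (1 / (H + 1 / 2) + 1 / (1 / 2 - H))) := by
      apply mul_nonneg (mul_nonneg hcH (by linarith))
      positivity
    linarith
  · intro s t hs hst htT
    have hts : 0 < t - s := by linarith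
    have hsT : s ≤ T := by linarith
    have htsT : t - s ≤ T := by linarith
    have hP1 : 0 < (t - s) ^ (H - 1 / 2) := Real.rpow_pos_of_pos hts _
    have hP2 : 0 < s ^ (H - 1 / 2) := Real.rpow_pos_of_pos hs _
    have hTT : T ^ (1 / 2 - H) * T ^ (H - 1 / 2) = 1 := by
      rw [← Real.rpow_add hT, show 1 / 2 - H + (H - 1 / 2) = 0 by ring, Real.rpow_zero]
    have honeS : 1 ≤ T ^ (1 / 2 - H) * s ^ (H - 1 / 2) := by
      have h := Real.rpow_le_rpow_of_nonpos hs hsT (show H - 1 / 2 ≤ 0 by linarith)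
      nlinarith
    have honeT : 1 ≤ T ^ (1 / 2 - H) * (t - s) ^ (H - 1 / 2) := by
      have h := Real.rpow_le_rpow_of_nonpos hts htsT (show H - 1 / 2 ≤ 0 by linarith)
      nlinarith
    set Q : ℝ := T ^ (1 / 2 - H) * ((t - s) ^ (H - 1 / 2) * s ^ (H - 1 / 2)) with hQ
    have hQ0 : 0 ≤ Q := by positivity
    have hupT : (t - s) ^ (H - 1 / 2) ≤ Q := by
      have := mul_le_mul_of_nonneg_left honeS hP1.le
      nlinarith
    have hupS : s ^ (H - 1 / 2) ≤ Q := by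
      have := mul_le_mul_of_nonneg_left honeT hP2.le
      nlinarith
    have hIbound : (∫ u in s..t, (u - s) ^ (H - 3 / 2) * (1 - (s / u) ^ (1 / 2 - H)))
        ≤ Q * (1 / (H + 1 / 2) + 1 / (1 / 2 - H)) := by
      by_cases hcase : t ≤ 2 * s
      · obtain ⟨hint, hbd⟩ := int_flat hH1 hH2 hs hst
        have e : (t - s) ^ (H + 1 / 2) = (t - s) ^ (H - 1 / 2) * (t - s) := by
          rw [show H + 1 / 2 = H - 1 / 2 + 1 by ring, Real.rpow_add_one (ne_of_gt hts)]
        have step : s⁻¹ * ((t - s) ^ (H + 1 / 2) / (H + 1 / 2))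
            ≤ (t - s) ^ (H - 1 / 2) * (1 / (H + 1 / 2)) := by
          rw [e]
          have e2 : s⁻¹ * ((t - s) ^ (H - 1 / 2) * (t - s) / (H + 1 / 2))
              = (t - s) ^ (H - 1 / 2) * (1 / (H + 1 / 2)) * ((t - s) * s⁻¹) := by
            ring
          rw [e2]
          have h3 : (t - s) * s⁻¹ ≤ 1 := by
            rw [← div_eq_mul_inv, div_le_one hs]
            linarith
          nlinarith [mul_pos hP1 hD1]
        have step2 : (t - s) ^ (H - 1 / 2) * (1 / (H + 1 / 2))
            ≤ Q * (1 / (H + 1 / 2) + 1 / (1 / 2 - H)) := by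
          have h4 : (t - s) ^ (H - 1 / 2) * (1 / (H + 1 / 2)) ≤ Q * (1 / (H + 1 / 2)) :=
            mul_le_mul_of_nonneg_right hupT hD1.le
          nlinarith
        linarith
      · push_neg at hcase
        obtain ⟨hint1, hbd1⟩ := int_flat hH1 hH2 hs (show s < 2 * s by linarith)
        obtain ⟨hint2, hbd2⟩ := int_tail hH1 hH2 hs hcase.le
        have hsplit : (∫ u in s..(2 * s), (u - s) ^ (H - 3 / 2) * (1 - (s / u) ^ (1 / 2 - H)))
            + (∫ u in (2 * s)..t, (u - s) ^ (H - 3 / 2) * (1 - (s / u) ^ (1 / 2 - H)))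
            = ∫ u in s..t, (u - s) ^ (H - 3 / 2) * (1 - (s / u) ^ (1 / 2 - H)) :=
          intervalIntegral.integral_add_adjacent_intervals hint1 hint2
        have e : s⁻¹ * ((2 * s - s) ^ (H + 1 / 2) / (H + 1 / 2))
            = s ^ (H - 1 / 2) * (1 / (H + 1 / 2)) := by
          rw [show 2 * s - s = s by ring,
            show H + 1 / 2 = H - 1 / 2 + 1 by ring, Real.rpow_add_one (ne_of_gt hs)]
          have e3 : s⁻¹ * (s ^ (H - 1 / 2) * s / (H - 1 / 2 + 1))
              = s ^ (H - 1 / 2) * (1 / (H - 1 / 2 + 1)) * (s * s⁻¹) := by ring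
          rw [e3, mul_inv_cancel₀ (ne_of_gt hs), mul_one]
        have hbd2' : (∫ u in (2 * s)..t, (u - s) ^ (H - 3 / 2) * (1 - (s / u) ^ (1 / 2 - H)))
            ≤ s ^ (H - 1 / 2) * (1 / (1 / 2 - H)) := by
          rw [mul_one_div]
          exact hbd2
        have htotal : (∫ u in s..t, (u - s) ^ (H - 3 / 2) * (1 - (s / u) ^ (1 / 2 - H)))
            ≤ s ^ (H - 1 / 2) * (1 / (H + 1 / 2) + 1 / (1 / 2 - H)) := by
          rw [← hsplit]
          rw [e] at hbd1
          nlinarith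
        have hfin : s ^ (H - 1 / 2) * (1 / (H + 1 / 2) + 1 / (1 / 2 - H))
            ≤ Q * (1 / (H + 1 / 2) + 1 / (1 / 2 - H)) :=
          mul_le_mul_of_nonneg_right hupS (by linarith)
        linarith
    unfold Klo
    have hterm1 : cH H * (t - s) ^ (H - 1 / 2) ≤ cH H * Q := mul_le_mul_of_nonneg_left hupT hcH
    have hterm2 : cH H * (1 / 2 - H) *
          (∫ u in s..t, (u - s) ^ (H - 3 / 2) * (1 - (s / u) ^ (1 / 2 - H)))
        ≤ cH H * (1 / 2 - H) * (Q * (1 / (H + 1 / 2) + 1 / (1 / 2 - H))) :=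
      mul_le_mul_of_nonneg_left hIbound (mul_nonneg hcH (by linarith))
    have hfinal : cH H * Q + cH H * (1 / 2 - H) * (Q * (1 / (H + 1 / 2) + 1 / (1 / 2 - H)))
        = (cH H * T ^ (1 / 2 - H) +
          cH H * (1 / 2 - H) * (T ^ (1 / 2 - H) * (1 / (H + 1 / 2) + 1 / (1 / 2 - H))))
          * (t - s) ^ (H - 1 / 2) * s ^ (H - 1 / 2) := by
      rw [hQ]; ring
    nlinarith [mul_pos hP1 hP2]
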